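/- Let H be a real Hilbert space, let A : H → H be a self-adjoint continuous linear operator, let T > 0, let M > 0, and let x ∈ H with x ≠ 0 and ‖x‖ ≤ M. Then for every t ∈ [0,T], ‖exp(tA) x‖ ≤ M^(1 − t/T) · ‖exp(TA) x‖^(t/T), where the powers are real powers. -/

import Mathlib

/-!
The function `s ↦ log ‖Y s‖`, where `Y s = exp (s A) x`, is convex. Indeed `F = ‖Y‖²` satisfies
`F' = 2 ⟪A Y, Y⟫` and, by self-adjointness, `F'' = 4 ‖A Y‖²`, so `F F'' ≥ F'²` is exactly the
Cauchy–Schwarz inequality for `A Y` and `Y`. Convexity of `log ‖Y‖` on `[0, T]` gives the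
interpolation `‖Y t‖ ≤ ‖Y 0‖ ^ (1 - t/T) * ‖Y T‖ ^ (t/T)`, and `‖Y 0‖ = ‖x‖ ≤ M`.
-/

open scoped RealInnerProductSpace
open Set

theorem convexOn_log_comp_of_sq_deriv_le {F F' F'' : ℝ → ℝ}
    (hF : ∀ s, HasDerivAt F (F' s) s) (hF' : ∀ s, HasDerivAt F' (F'' s) s)
    (hpos : ∀ s, 0 < F s) (hle : ∀ s, F' s ^ 2 ≤ F s * F'' s) :
    ConvexOn ℝ univ (fun s => Real.log (F s)) := by
  have hlog : ∀ s, HasDerivAt (fun u => Real.log (F u)) (F' s / F s) s :=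
    fun s => (hF s).log (hpos s).ne'
  have hlog' : ∀ s, HasDerivAt (fun u => F' u / F u)
      ((F'' s * F s - F' s * F' s) / F s ^ 2) s :=
    fun s => (hF' s).div (hF s) (hpos s).ne'
  refine convexOn_of_hasDerivWithinAt2_nonneg convex_univ
    (fun s _ => (hlog s).continuousAt.continuousWithinAt)
    (fun s _ => (hlog s).hasDerivWithinAt) (fun s _ => (hlog' s).hasDerivWithinAt)
    (fun s _ => div_nonneg ?_ (sq_nonneg _))
  nlinarith [hle s]

theorem le_rpow_mul_rpow_of_convexOn_log {g : ℝ → ℝ} (hpos : ∀ s, 0 < g s)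
    (hconv : ConvexOn ℝ univ (fun s => Real.log (g s))) (a b : ℝ) {θ : ℝ}
    (hθ₀ : 0 ≤ θ) (hθ₁ : θ ≤ 1) :
    g ((1 - θ) * a + θ * b) ≤ g a ^ (1 - θ) * g b ^ θ := by
  have hlog := hconv.2 (mem_univ a) (mem_univ b) (sub_nonneg.2 hθ₁) hθ₀ (sub_add_cancel 1 θ)
  simp only [smul_eq_mul] at hlog
  rw [Real.rpow_def_of_pos (hpos a), Real.rpow_def_of_pos (hpos b), ← Real.exp_add,
    ← Real.exp_log (hpos _)]
  exact Real.exp_le_exp.2 (by linarith)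

section Exponential

variable {E : Type*} [NormedAddCommGroup E] [NormedSpace ℝ E] [CompleteSpace E]

theorem hasDerivAt_exp_smul_apply (A : E →L[ℝ] E) (x : E) (s : ℝ) :
    HasDerivAt (fun u : ℝ => NormedSpace.exp (u • A) x) (A (NormedSpace.exp (s • A) x)) s := by
  simpa using (hasDerivAt_exp_smul_const' A s).clm_apply (hasDerivAt_const s x)

theorem exp_apply_ne_zero (A : E →L[ℝ] E) {x : E} (hx : x ≠ 0) :
    NormedSpace.exp A x ≠ 0 := by
  intro h
  have hball : ∀ B : E →L[ℝ] E, B ∈ Metric.eball 0 (NormedSpace.expSeries ℝ (E →L[ℝ] E)).radius :=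
    fun B => (NormedSpace.expSeries_radius_eq_top ℝ (E →L[ℝ] E)).symm ▸ edist_lt_top _ _
  have hinv : NormedSpace.exp (-A) * NormedSpace.exp A = 1 := by
    rw [← NormedSpace.exp_add_of_commute_of_mem_ball (Commute.neg_left (Commute.refl A))
      (hball _) (hball _), neg_add_cancel, NormedSpace.exp_zero]
  apply hx
  simpa [h] using (congrArg (· x) hinv).symm

end Exponential

theorem convexOn_log_norm_of_hasDerivAt_apply {H : Type*} [NormedAddCommGroup H]
    [InnerProductSpace ℝ H] {A : H →L[ℝ] H} (hA : (A : H →ₗ[ℝ] H).IsSymmetric)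
    {Y : ℝ → H} (hY : ∀ s, HasDerivAt Y (A (Y s)) s) (hY₀ : ∀ s, Y s ≠ 0) :
    ConvexOn ℝ univ (fun s => Real.log ‖Y s‖) := by
  have hF : ∀ s, HasDerivAt (fun u => ⟪Y u, Y u⟫) (2 * ⟪A (Y s), Y s⟫) s := fun s => by
    refine ((hY s).inner ℝ (hY s)).congr_deriv ?_
    rw [real_inner_comm (Y s)]
    ring
  have hF' : ∀ s, HasDerivAt (fun u => 2 * ⟪A (Y u), Y u⟫) (4 * ⟪A (Y s), A (Y s)⟫) s :=
    fun s => by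
      refine (((A.hasFDerivAt.comp_hasDerivAt s (hY s)).inner ℝ (hY s)).const_mul 2).congr_deriv ?_
      rw [Function.comp_apply, show ⟪A (A (Y s)), Y s⟫ = ⟪A (Y s), A (Y s)⟫ from hA _ _]
      ring
  have hlog := convexOn_log_comp_of_sq_deriv_le hF hF'
    (fun s => real_inner_self_pos.2 (hY₀ s))
    (fun s => by nlinarith [real_inner_mul_inner_self_le (A (Y s)) (Y s)])
  have hlog_norm : ∀ s, Real.log ‖Y s‖ = (1 / 2 : ℝ) * Real.log ⟪Y s, Y s⟫ := fun s => by
    rw [real_inner_self_eq_norm_sq, Real.log_pow]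
    ring
  simpa only [hlog_norm, smul_eq_mul] using hlog.smul (by norm_num : (0 : ℝ) ≤ 1 / 2)

theorem stmt_2_general
    {H : Type*} [NormedAddCommGroup H] [InnerProductSpace ℝ H] [CompleteSpace H]
    (A : H →L[ℝ] H) (hA : ∀ x y : H, ⟪A x, y⟫ = ⟪x, A y⟫)
    (T M : ℝ) (hT : 0 < T)
    (x : H) (hx : x ≠ 0) (hxM : ‖x‖ ≤ M) :
    ∀ t ∈ Set.Icc (0 : ℝ) T,
      ‖NormedSpace.exp (t • A) x‖ ≤
        M ^ (1 - t / T) * ‖NormedSpace.exp (T • A) x‖ ^ (t / T) := by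
  rintro t ⟨ht₀, htT⟩
  have hθ₀ : 0 ≤ t / T := div_nonneg ht₀ hT.le
  have hθ₁ : t / T ≤ 1 := (div_le_one hT).2 htT
  have hconv := convexOn_log_norm_of_hasDerivAt_apply hA (hasDerivAt_exp_smul_apply A x)
    (fun s => exp_apply_ne_zero (s • A) hx)
  have hinterp := le_rpow_mul_rpow_of_convexOn_log
    (fun s => norm_pos_iff.2 (exp_apply_ne_zero (s • A) hx)) hconv 0 T hθ₀ hθ₁
  rw [mul_zero, zero_add, div_mul_cancel₀ t hT.ne', zero_smul, NormedSpace.exp_zero,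
    one_apply_eq_self] at hinterp
  calc ‖NormedSpace.exp (t • A) x‖
      ≤ ‖x‖ ^ (1 - t / T) * ‖NormedSpace.exp (T • A) x‖ ^ (t / T) := hinterp
    _ ≤ M ^ (1 - t / T) * ‖NormedSpace.exp (T • A) x‖ ^ (t / T) := by
      gcongr

theorem stmt_2
    {H : Type*} [NormedAddCommGroup H] [InnerProductSpace ℝ H] [CompleteSpace H]
    (A : H →L[ℝ] H) (hA : ∀ x y : H, ⟪A x, y⟫ = ⟪x, A y⟫)
    (T M : ℝ) (hT : 0 < T) (hM : 0 < M)
    (x : H) (hx : x ≠ 0) (hxM : ‖x‖ ≤ M) :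
    ∀ t ∈ Set.Icc (0 : ℝ) T,
      ‖NormedSpace.exp (t • A) x‖ ≤
        M ^ (1 - t / T) * ‖NormedSpace.exp (T • A) x‖ ^ (t / T) :=
  stmt_2_general A hA T M hT x hx hxM
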